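/- Let φ : ℝ → ℝ be strictly decreasing (strictly antitone) and convex, and let g : ℝ → ℝ satisfy g(φ(x)) = x for all x ∈ ℝ (so g restricts to the inverse of φ on its range T = Set.range φ). Then the function g_φ defined on T by g_φ(x) = x + φ(−g(x)) is convex on T, i.e., ConvexOn ℝ (Set.range φ) (fun x => x + φ(−g(x))). -/

import Mathlib

/-! On the interval `T = range φ` the left inverse `g` is the inverse of a decreasing convex
function, hence convex: `φ (s a + t b) ≤ s φ a + t φ b = φ c` forces `c ≤ s a + t b`.
Then `-g` is concave and `φ` is convex and decreasing, so `φ ∘ (-g)` is convex. -/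

open Set Function

theorem ConvexOn.convexOn_range_of_leftInverse {𝕜 β : Type*} [Field 𝕜] [LinearOrder 𝕜]
    [IsStrictOrderedRing 𝕜] [AddCommMonoid β] [PartialOrder β] [IsOrderedAddMonoid β]
    [Module 𝕜 β] {φ : 𝕜 → β} {g : β → 𝕜} (hφ : ConvexOn 𝕜 univ φ) (hanti : StrictAnti φ)
    (hg : LeftInverse g φ) (hT : Convex 𝕜 (range φ)) : ConvexOn 𝕜 (range φ) g := by
  refine ⟨hT, ?_⟩
  rintro _ ⟨a, rfl⟩ _ ⟨b, rfl⟩ s t hs ht hst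
  obtain ⟨c, hc⟩ := hT ⟨a, rfl⟩ ⟨b, rfl⟩ hs ht hst
  rw [← hc, hg, hg, hg]
  have : φ (s • a + t • b) ≤ φ c := hc ▸ hφ.2 (mem_univ a) (mem_univ b) hs ht hst
  simpa using hanti.le_iff_ge.1 this

/-- If `φ : ℝ → ℝ` is strictly decreasing and convex, and `g` is a left inverse of `φ`
(so `g` restricts to the inverse of `φ` on its range `T = Set.range φ`), then the
surrogate-loss regularizer `g_φ(x) = x + φ(−g(x))` is convex on `T`. -/
theorem g_phi_convexOn
    (φ g : ℝ → ℝ) (hφ_anti : StrictAnti φ) (hφ_conv : ConvexOn ℝ Set.univ φ)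
    (hg : ∀ x : ℝ, g (φ x) = x) :
    ConvexOn ℝ (Set.range φ) (fun x => x + φ (-g x)) := by
  have hT : Convex ℝ (range φ) :=
    (isPreconnected_range (continuousOn_univ.1 (hφ_conv.continuousOn isOpen_univ))).convex
  have hg_conv : ConvexOn ℝ (range φ) g := hφ_conv.convexOn_range_of_leftInverse hφ_anti hg hT
  have himage : (fun x => -g x) '' range φ = univ :=
    eq_univ_of_forall fun y => ⟨φ (-y), mem_range_self _, by simp [hg]⟩
  have hφ_conv' : ConvexOn ℝ ((fun x => -g x) '' range φ) φ := by rwa [himage]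
  exact (convexOn_id hT).add
    (hφ_conv'.comp_concaveOn hg_conv.neg (hφ_anti.antitone.antitoneOn _))
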